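/- Let G, F : [0,∞]² → Vec_𝔽 be functors and η : G → F a natural transformation. If G is codegree 1 (takes each square x∧y, x, y, x∨y in [0,∞]² to a pushout of vector spaces) and F is middle-exact, then the objectwise cokernel functor coker(η) : [0,∞]² → Vec_𝔽 is middle-exact. -/

import Mathlib

open CategoryTheory CategoryTheory.Limits

/-- We regard the poset `[0,∞]² = ENNReal × ENNReal` as a category via its
product partial order. -/
noncomputable local instance (priority := 2000) : Category (ENNReal × ENNReal) :=
  Preorder.smallCategory _

/-- A commuting square `α : A ⟶ B`, `f : A ⟶ C`, `g : B ⟶ D`, `β : C ⟶ D`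
(with `α ≫ g = f ≫ β`) is *middle-exact* if the associated complex
`A ⟶ B ⊞ C ⟶ D`, with maps `(α, f)` and `(g, -β)`, is exact in the middle. -/
def MiddleExact {𝒜 : Type*} [Category 𝒜] [Abelian 𝒜] {A B C D : 𝒜}
    (α : A ⟶ B) (f : A ⟶ C) (g : B ⟶ D) (β : C ⟶ D) (w : α ≫ g = f ≫ β) : Prop :=
  (ShortComplex.mk (biprod.lift α f) (biprod.desc g (-β))
    (by simp [biprod.lift_desc, w])).Exact

/-- The square `F(x ⊓ y) → F(x) → F(x ⊔ y)`, `F(x ⊓ y) → F(y) → F(x ⊔ y)` commutes. -/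
theorem squareW {P : Type*} [Lattice P] {𝒜 : Type*} [Category 𝒜] (F : P ⥤ 𝒜) (x y : P) :
    F.map (homOfLE (inf_le_left : x ⊓ y ≤ x)) ≫ F.map (homOfLE (le_sup_left : x ≤ x ⊔ y)) =
      F.map (homOfLE (inf_le_right : x ⊓ y ≤ y)) ≫
        F.map (homOfLE (le_sup_right : y ≤ x ⊔ y)) := by
  rw [← F.map_comp, ← F.map_comp]
  exact congrArg F.map (Subsingleton.elim _ _)

/-- A functor from a lattice to an abelian category is *2-middle-exact* if each
square `F(x ⊓ y), F(x), F(y), F(x ⊔ y)` is middle-exact. -/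
def TwoMiddleExact {P : Type*} [Lattice P] {𝒜 : Type*} [Category 𝒜] [Abelian 𝒜]
    (F : P ⥤ 𝒜) : Prop :=
  ∀ x y : P, MiddleExact (F.map (homOfLE (inf_le_left : x ⊓ y ≤ x)))
    (F.map (homOfLE (inf_le_right : x ⊓ y ≤ y)))
    (F.map (homOfLE (le_sup_left : x ≤ x ⊔ y)))
    (F.map (homOfLE (le_sup_right : y ≤ x ⊔ y))) (squareW F x y)

/-!
Fix `p, q` and let `S_H` be the complex `H(p ⊓ q) ⟶ H(p) ⊞ H(q) ⟶ H(p ⊔ q)`. The maps `η` and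
`cokernel.π η` give morphisms `S_G ⟶ S_F ⟶ S_{coker η}` that are columnwise right exact, because
cokernels of functors are computed objectwise. A diagram chase shows that `S_{coker η}` is exact
whenever `S_F` is exact and the second map of `S_G` is epi, which holds because the `G`-square is
a pushout.
-/

universe v

namespace CategoryTheory

open Category

variable {𝒜 : Type*} [Category.{v} 𝒜] [Abelian 𝒜]

lemma ShortComplex.Exact.of_rightExact_columns {S₁ S₂ S₃ : ShortComplex 𝒜} (hS₂ : S₂.Exact)
    (φ : S₁ ⟶ S₂) (ψ : S₂ ⟶ S₃) (hφψ : φ ≫ ψ = 0) [Epi ψ.τ₂]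
    (hcol₃ : (ShortComplex.mk φ.τ₃ ψ.τ₃ (by rw [← comp_τ₃, hφψ, zero_τ₃])).Exact)
    [Epi S₁.g] : S₃.Exact := by
  rw [exact_iff_exact_up_to_refinements]
  intro A x₃ hx₃
  obtain ⟨A₁, π₁, _, x₂, hx₂⟩ := surjective_up_to_refinements_of_epi ψ.τ₂ x₃
  obtain ⟨A₂, π₂, _, t, ht⟩ := hcol₃.exact_up_to_refinements (x₂ ≫ S₂.g) (by
    rw [assoc, ← ψ.comm₂₃, ← reassoc_of% hx₂, hx₃, comp_zero])
  obtain ⟨A₃, π₃, _, u, hu⟩ := surjective_up_to_refinements_of_epi S₁.g t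
  obtain ⟨A₄, π₄, _, v, hv⟩ := hS₂.exact_up_to_refinements (π₃ ≫ π₂ ≫ x₂ - u ≫ φ.τ₂) (by
    rw [Preadditive.sub_comp, sub_eq_zero, assoc, assoc, ht, reassoc_of% hu, assoc]
    exact u ≫= φ.comm₂₃.symm)
  refine ⟨A₄, π₄ ≫ π₃ ≫ π₂ ≫ π₁, inferInstance, v ≫ ψ.τ₁, ?_⟩
  have hφψ₂ : φ.τ₂ ≫ ψ.τ₂ = 0 := by rw [← comp_τ₂, hφψ, zero_τ₂]
  simp only [assoc, hx₂, ψ.comm₁₂, ← reassoc_of% hv, Preadditive.sub_comp, hφψ₂, comp_zero,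
    sub_zero]

lemma IsPushout.epi_biprod_desc_neg {X₁ X₂ X₃ X₄ : 𝒜} {f : X₁ ⟶ X₂} {g : X₁ ⟶ X₃}
    {inl : X₂ ⟶ X₄} {inr : X₃ ⟶ X₄} (hsq : IsPushout f g inl inr) :
    Epi (biprod.desc inl (-inr)) := by
  have : Epi (biprod.desc inl inr) := hsq.epi_shortComplex_g
  exact epi_of_epi_fac (f := biprod.map (𝟙 _) (-𝟙 _)) (h := biprod.desc inl inr)
    (by ext <;> simp)

end CategoryTheory

section LatticeSquares

variable {𝒜 : Type*} [Category.{v} 𝒜] [Abelian 𝒜] {P : Type*} [Lattice P]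

noncomputable abbrev squareComplex (F : P ⥤ 𝒜) (x y : P) : ShortComplex 𝒜 where
  X₁ := F.obj (x ⊓ y)
  X₂ := F.obj x ⊞ F.obj y
  X₃ := F.obj (x ⊔ y)
  f := biprod.lift (F.map (homOfLE inf_le_left)) (F.map (homOfLE inf_le_right))
  g := biprod.desc (F.map (homOfLE le_sup_left)) (-F.map (homOfLE le_sup_right))
  zero := by simp [squareW F x y]

lemma twoMiddleExact_iff (F : P ⥤ 𝒜) :
    TwoMiddleExact F ↔ ∀ x y, (squareComplex F x y).Exact :=
  Iff.rfl

noncomputable def squareComplexMap {G F : P ⥤ 𝒜} (η : G ⟶ F) (x y : P) :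
    squareComplex G x y ⟶ squareComplex F x y where
  τ₁ := η.app (x ⊓ y)
  τ₂ := biprod.map (η.app x) (η.app y)
  τ₃ := η.app (x ⊔ y)
  comm₁₂ := by apply biprod.hom_ext <;> simp
  comm₂₃ := by apply biprod.hom_ext' <;> simp

lemma squareComplexMap_comp {F G H : P ⥤ 𝒜} (α : F ⟶ G) (β : G ⟶ H) (x y : P) :
    squareComplexMap (α ≫ β) x y = squareComplexMap α x y ≫ squareComplexMap β x y := by
  ext <;> simp [squareComplexMap]

lemma squareComplexMap_zero (G F : P ⥤ 𝒜) (x y : P) :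
    squareComplexMap (0 : G ⟶ F) x y = 0 := by
  ext <;> simp [squareComplexMap]

lemma squareComplexMap_comp_cokernel_π {G F : P ⥤ 𝒜} (η : G ⟶ F) (x y : P) :
    squareComplexMap η x y ≫ squareComplexMap (cokernel.π η) x y = 0 := by
  rw [← squareComplexMap_comp, cokernel.condition, squareComplexMap_zero]

theorem twoMiddleExact_cokernel {G F : P ⥤ 𝒜} (η : G ⟶ F)
    (hG : ∀ p q : P, IsPushout (G.map (homOfLE (inf_le_left : p ⊓ q ≤ p)))
      (G.map (homOfLE (inf_le_right : p ⊓ q ≤ q)))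
      (G.map (homOfLE (le_sup_left : p ≤ p ⊔ q)))
      (G.map (homOfLE (le_sup_right : q ≤ p ⊔ q))))
    (hF : TwoMiddleExact F) : TwoMiddleExact (cokernel η) := by
  rw [twoMiddleExact_iff] at hF ⊢
  intro p q
  have : Epi (squareComplex G p q).g := (hG p q).epi_biprod_desc_neg
  have : Epi (squareComplexMap (cokernel.π η) p q).τ₂ := by
    dsimp only [squareComplexMap]; infer_instance
  exact (hF p q).of_rightExact_columns _ _ (squareComplexMap_comp_cokernel_π η p q)
    ((ShortComplex.exact_cokernel η).map ((evaluation P 𝒜).obj (p ⊔ q)))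

end LatticeSquares

/-- Let `G, F : [0,∞]² → Vec_𝔽` and `η : G ⟶ F`. If `G` is codegree 1 (each square
`G(p ⊓ q), G(p), G(q), G(p ⊔ q)` is a pushout) and `F` is middle-exact, then the
objectwise cokernel of `η` is middle-exact. -/
theorem cokernel_middleExact {𝔽 : Type*} [Field 𝔽]
    (G F : ENNReal × ENNReal ⥤ ModuleCat 𝔽) (η : G ⟶ F)
    (hG : ∀ p q : ENNReal × ENNReal, IsPushout (G.map (homOfLE (inf_le_left : p ⊓ q ≤ p)))
      (G.map (homOfLE (inf_le_right : p ⊓ q ≤ q)))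
      (G.map (homOfLE (le_sup_left : p ≤ p ⊔ q)))
      (G.map (homOfLE (le_sup_right : q ≤ p ⊔ q))))
    (hF : TwoMiddleExact F) :
    TwoMiddleExact (cokernel η) :=
  twoMiddleExact_cokernel η hG hF
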